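/- Let α > 0 be real. For all real t with |t| ≤ 1 and all real r with 0 < r < 1, (1 - 2rt + r²)^{-α} = Σ_{m=0}^∞ r^m C^α_m(t), where C^α_m is the Gegenbauer polynomial of degree m and index α. -/

import Mathlib

/-!
Near `0`, put `u = z (2t - z)` into the binomial series
`(1 - u)^{-α} = ∑ Ring.choose (α + k - 1) k uᵏ` and collect powers of `z`: this gives
`∑ C^α_m(t) zᵐ`, the rearrangement being justified by absolute convergence as long as
`|z| (2|t| + |z|) < 1`. For `|t| ≤ 1` the base `1 - 2zt + z²`
avoids `(-∞, 0]` on the unit disc, so `(1 - 2zt + z²)^{-α}` is holomorphic there and its Taylor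
series at `0`, which is therefore `∑ C^α_m(t) zᵐ`, converges on the whole unit disc.
-/

open Finset

noncomputable section

/-- The Gegenbauer polynomial of degree `m` and index `α`. -/
def gegenbauer (α : ℝ) (m : ℕ) (t : ℝ) : ℝ :=
  ∑ j ∈ Finset.range (m / 2 + 1),
    (-1) ^ j * Real.Gamma (α + m - j) /
      (Real.Gamma α * Real.Gamma (j + 1) * Real.Gamma ((m : ℝ) + 1 - 2 * j)) *
      (2 * t) ^ (m - 2 * j)

open Metric
open scoped Nat NNReal ENNReal

theorem HasSum.sum_antidiagonal {E : Type*} [AddCommMonoid E] [TopologicalSpace E]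
    [ContinuousAdd E] [RegularSpace E] {f : ℕ × ℕ → E} {s : E} (hf : HasSum f s) :
    HasSum (fun n => ∑ p ∈ antidiagonal n, f p) s := by
  rw [← (HasAntidiagonal.sigmaAntidiagonalEquivProd (A := ℕ)).hasSum_iff] at hf
  refine hf.sigma fun n => ?_
  rw [← sum_coe_sort]
  exact hasSum_fintype _

theorem hasSum_choose_mul_pow_mul_pow {R : Type*} [CommSemiring R] [TopologicalSpace R]
    (w s z : R) (k : ℕ) :
    HasSum (fun j => k.choose j * w ^ (k - j) * s ^ j * z ^ (k + j)) ((z * (w + s * z)) ^ k) := by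
  convert hasSum_sum_of_ne_finset_zero (L := .unconditional ℕ) (s := range (k + 1))
    fun j hj => ?_ using 1
  · rw [show z * (w + s * z) = s * z ^ 2 + z * w by ring, add_pow]
    refine sum_congr rfl fun j hj => ?_
    have hjk : j ≤ k := Nat.lt_succ_iff.1 (mem_range.1 hj)
    rw [show k + j = 2 * j + (k - j) by omega, pow_add, pow_mul, mul_pow, mul_pow]
    ring
  · rw [Nat.choose_eq_zero_of_lt (by simpa using hj)]
    simp

theorem sum_antidiagonal_choose_mul_pow {R : Type*} [CommRing R] (b : ℕ → R) (w z : R) (m : ℕ) :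
    ∑ p ∈ antidiagonal m, b p.1 * (p.1.choose p.2 * w ^ (p.1 - p.2) * (-1) ^ p.2 * z ^ (p.1 + p.2))
      = (∑ j ∈ range (m / 2 + 1), b (m - j) * (m - j).choose j * w ^ (m - 2 * j) * (-1) ^ j)
          * z ^ m := by
  rw [← Nat.sum_antidiagonal_swap, Nat.sum_antidiagonal_eq_sum_range_succ_mk, sum_mul]
  symm
  refine sum_subset (range_subset_range.2 (by omega)) (fun j hjm hj => ?_) |>.trans
    (sum_congr rfl fun j hj => ?_)
  · simp only [mem_range] at hjm hj
    simp [Nat.choose_eq_zero_of_lt (show m - j < j by omega)]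
  · have hjm : j ≤ m := Nat.lt_succ_iff.1 (mem_range.1 hj)
    simp only [Prod.swap_prod_mk, show m - j - j = m - 2 * j by omega, Nat.sub_add_cancel hjm]
    ring

theorem hasSum_sum_choose_mul_pow {𝕜 : Type*} [RCLike 𝕜] {b : ℕ → 𝕜} {w z : 𝕜}
    (hb : Summable fun k => ‖b k‖ * (‖z‖ * (‖w‖ + ‖z‖)) ^ k) :
    HasSum (fun m => (∑ j ∈ range (m / 2 + 1), b (m - j) * (m - j).choose j * w ^ (m - 2 * j)
      * (-1) ^ j) * z ^ m) (∑' k, b k * (z * (w - z)) ^ k) := by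
  set a : ℕ × ℕ → 𝕜 := fun p =>
    b p.1 * (p.1.choose p.2 * w ^ (p.1 - p.2) * (-1) ^ p.2 * z ^ (p.1 + p.2))
  have hrow (k : ℕ) : HasSum (fun j => a (k, j)) (b k * (z * (w - z)) ^ k) := by
    simpa [sub_eq_add_neg] using (hasSum_choose_mul_pow_mul_pow w (-1) z k).mul_left (b k)
  have hrow_norm (k : ℕ) :
      HasSum (fun j => ‖a (k, j)‖) (‖b k‖ * (‖z‖ * (‖w‖ + ‖z‖)) ^ k) := by
    simpa [a] using (hasSum_choose_mul_pow_mul_pow ‖w‖ 1 ‖z‖ k).mul_left ‖b k‖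
  have ha : Summable a := Summable.of_norm <| (summable_prod_of_nonneg fun _ => norm_nonneg _).2
    ⟨fun k => (hrow_norm k).summable, by simpa only [(hrow_norm _).tsum_eq] using hb⟩
  have hsum : HasSum a (∑' k, b k * (z * (w - z)) ^ k) := by
    simpa only [ha.tsum_prod, (hrow _).tsum_eq] using ha.hasSum
  simpa only [a, sum_antidiagonal_choose_mul_pow] using hsum.sum_antidiagonal

theorem hasFPowerSeriesOnBall_ofScalars_of_hasSum {𝕜 : Type*} [RCLike 𝕜] {f : 𝕜 → 𝕜}
    {c : ℕ → 𝕜} {R : ℝ≥0} (hR : 0 < R)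
    (hf : ∀ z : 𝕜, ‖z‖ < R → HasSum (fun n => c n * z ^ n) (f z)) :
    HasFPowerSeriesOnBall f (FormalMultilinearSeries.ofScalars 𝕜 c) 0 R where
  r_le := by
    refine ENNReal.le_of_forall_nnreal_lt fun ρ hρ => ?_
    have hsum := hf ((ρ : ℝ) : 𝕜) (by simpa using hρ)
    refine FormalMultilinearSeries.le_radius_of_tendsto _ (l := 0) ?_
    simpa [FormalMultilinearSeries.ofScalars_norm] using hsum.summable.tendsto_atTop_zero.norm
  r_pos := by simpa using hR
  hasSum hy := by
    simpa [FormalMultilinearSeries.ofScalars_apply_eq, mul_comm] using hf _ (by simpa using hy)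

/-- The power series coincides with the Cauchy power series of `f` on every smaller closed disc. -/
theorem HasFPowerSeriesAt.hasSum_of_differentiableOn {E : Type*} [NormedAddCommGroup E]
    [NormedSpace ℂ E] [CompleteSpace E] {f : ℂ → E} {p : FormalMultilinearSeries ℂ ℂ E}
    {c y : ℂ} {R : ℝ} (hp : HasFPowerSeriesAt f p c) (hf : DifferentiableOn ℂ f (ball c R))
    (hy : ‖y‖ < R) : HasSum (fun n => p n fun _ => y) (f (c + y)) := by
  obtain ⟨R', hyR', hR'R⟩ := exists_between hy
  lift R' to ℝ≥0 using (norm_nonneg y).trans hyR'.le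
  have hq := (hf.mono (closedBall_subset_ball hR'R)).hasFPowerSeriesOnBall
    ((norm_nonneg y).trans_lt hyR')
  rw [hp.eq_formalMultilinearSeries hq.hasFPowerSeriesAt]
  exact hq.hasSum (by simpa [← ofReal_norm] using hyR')

theorem Complex.Gamma_add_nat_eq_mul_choose {a : ℂ} (ha : ∀ k : ℕ, a ≠ -k) (n : ℕ) :
    Gamma (a + n) = Gamma a * n ! * Ring.choose (a + n - 1) n := by
  have hmul : (n ! : ℂ) * Ring.choose (a + n - 1) n = (ascPochhammer ℂ n).eval a := by
    rw [← Ring.multichoose_eq, ← nsmul_eq_mul, Ring.factorial_nsmul_multichoose_eq_ascPochhammer,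
      Polynomial.ascPochhammer_smeval_eq_eval]
  rw [mul_assoc, hmul, ← Gamma_add_nat_div_Gamma_eq a ha, mul_div_cancel₀ _ (Gamma_ne_zero ha)]

theorem ofReal_gegenbauer {α : ℝ} (hα : ∀ k : ℕ, α ≠ -k) (m : ℕ) (t : ℝ) :
    (gegenbauer α m t : ℂ) = ∑ j ∈ range (m / 2 + 1),
      Ring.choose ((α : ℂ) + (m - j : ℕ) - 1) (m - j) * (m - j).choose j * (2 * t) ^ (m - 2 * j)
        * (-1) ^ j := by
  have hα' : ∀ k : ℕ, (α : ℂ) ≠ -k := fun k h => hα k (by exact_mod_cast h)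
  simp only [gegenbauer, Complex.ofReal_sum]
  refine sum_congr rfl fun j hj => ?_
  have h2j : 2 * j ≤ m := by have := mem_range.1 hj; omega
  have hΓα : Complex.Gamma (α + m - j)
      = Complex.Gamma α * (m - j)! * Ring.choose ((α : ℂ) + (m - j : ℕ) - 1) (m - j) := by
    rw [← Complex.Gamma_add_nat_eq_mul_choose hα', Nat.cast_sub (by omega), add_sub_assoc]
  have hΓm : Complex.Gamma ((m : ℂ) + 1 - 2 * j) = (m - 2 * j)! := by
    rw [← Complex.Gamma_nat_eq_factorial, Nat.cast_sub h2j]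
    push_cast
    ring_nf
  have hchoose : ((m - j)! : ℂ) = (m - j).choose j * j ! * (m - 2 * j)! := by
    rw [show m - 2 * j = m - j - j by omega]
    exact_mod_cast (Nat.choose_mul_factorial_mul_factorial (by omega)).symm
  have hΓ : Complex.Gamma α ≠ 0 := Complex.Gamma_ne_zero hα'
  have hfact : (j ! * (m - 2 * j)! : ℂ) ≠ 0 := by norm_cast; positivity
  push_cast [← Complex.Gamma_ofReal]
  rw [hΓα, hΓm, Complex.Gamma_nat_eq_factorial, hchoose]
  field_simp
  rw [div_eq_iff hfact]
  ring

theorem hasSum_gegenbauer_mul_pow {α : ℝ} (hα : ∀ k : ℕ, α ≠ -k) (t : ℝ) {z : ℂ}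
    (hz : ‖z‖ * (2 * |t| + ‖z‖) < 1) :
    HasSum (fun m => (gegenbauer α m t : ℂ) * z ^ m) ((1 - 2 * z * t + z ^ 2) ^ (-α : ℂ)) := by
  have hbin := Complex.one_div_one_sub_cpow_hasFPowerSeriesOnBall_zero α
  have hu : ‖z * (2 * t - z)‖ < 1 := by
    refine lt_of_le_of_lt ?_ hz
    rw [norm_mul]
    gcongr
    refine (norm_sub_le _ _).trans_eq ?_
    simp
  have hb : Summable fun k : ℕ =>
      ‖Ring.choose ((α : ℂ) + k - 1) k‖ * (‖z‖ * (‖(2 * t : ℂ)‖ + ‖z‖)) ^ k := by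
    obtain ⟨x, hx⟩ : ∃ x : ℝ≥0, (x : ℝ) = ‖z‖ * (‖(2 * t : ℂ)‖ + ‖z‖) :=
      ⟨⟨_, by positivity⟩, rfl⟩
    have hx1 : (x : ℝ≥0∞) < 1 := by
      rw [← ENNReal.coe_one, ENNReal.coe_lt_coe, ← NNReal.coe_lt_coe, hx]
      simpa using hz
    rw [← hx]
    simpa [FormalMultilinearSeries.ofScalars_norm] using
      FormalMultilinearSeries.summable_norm_mul_pow _ (hx1.trans_le hbin.r_le)
  have hval := (hbin.hasSum (y := z * (2 * t - z))
    (by rw [mem_eball_zero_iff, ← ofReal_norm]; exact ENNReal.ofReal_lt_one.2 hu)).tsum_eq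
  simp only [FormalMultilinearSeries.ofScalars_apply_eq, smul_eq_mul, zero_add] at hval
  have H := hasSum_sum_choose_mul_pow hb
  rw [hval, show 1 - z * (2 * t - z) = 1 - 2 * z * t + z ^ 2 by ring] at H
  simpa only [ofReal_gegenbauer hα, Complex.cpow_neg, one_div] using H

theorem one_sub_two_mul_mul_add_sq_mem_slitPlane {t : ℝ} (ht : |t| ≤ 1) {z : ℂ} (hz : ‖z‖ < 1) :
    1 - 2 * z * t + z ^ 2 ∈ Complex.slitPlane := by
  have hz' : z.re ^ 2 + z.im ^ 2 < 1 := by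
    have h := pow_lt_one₀ (norm_nonneg z) hz two_ne_zero
    rwa [Complex.sq_norm, Complex.normSq_apply, ← sq, ← sq] at h
  have hre : (1 - 2 * z * t + z ^ 2).re = 1 - 2 * z.re * t + z.re ^ 2 - z.im ^ 2 := by
    simp only [sq, Complex.add_re, Complex.sub_re, Complex.one_re, Complex.mul_re,
      Complex.re_ofNat, Complex.im_ofNat, Complex.ofReal_re, Complex.ofReal_im]
    ring
  have him : (1 - 2 * z * t + z ^ 2).im = 2 * z.im * (z.re - t) := by
    simp only [sq, Complex.add_im, Complex.sub_im, Complex.one_im, Complex.mul_im,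
      Complex.mul_re, Complex.re_ofNat, Complex.im_ofNat, Complex.ofReal_re, Complex.ofReal_im]
    ring
  rw [Complex.mem_slitPlane_iff, or_iff_not_imp_right, not_not, hre, him]
  intro h
  rcases mul_eq_zero.1 h with h | h
  · rw [mul_eq_zero.1 h |>.resolve_left two_ne_zero] at hz' ⊢
    nlinarith [abs_le.1 ht, sq_nonneg (1 - z.re), sq_nonneg (1 + z.re), sq_nonneg (z.re - t)]
  · rw [sub_eq_zero.1 h] at hz' ⊢
    nlinarith

/-- **Generating function of the Gegenbauer polynomials.** For `α > 0`, `|t| ≤ 1`, and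
`0 < r < 1`: `(1 - 2rt + r²)^{-α} = Σ_{m=0}^∞ r^m C^α_m(t)`. -/
theorem gegenbauer_generating_function (α : ℝ) (hα : 0 < α)
    (t r : ℝ) (ht : |t| ≤ 1) (hr0 : 0 < r) (hr1 : r < 1) :
    (1 - 2 * r * t + r ^ 2) ^ (-α) = ∑' m : ℕ, r ^ m * gegenbauer α m t := by
  set F : ℂ → ℂ := fun z => (1 - 2 * z * t + z ^ 2) ^ (-α : ℂ)
  have hα' : ∀ k : ℕ, α ≠ -k := fun k => ((neg_nonpos.2 k.cast_nonneg).trans_lt hα).ne'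
  have hsmall : HasFPowerSeriesAt F (.ofScalars ℂ fun m => (gegenbauer α m t : ℂ)) 0 :=
    (hasFPowerSeriesOnBall_ofScalars_of_hasSum (R := 1 / 3) (by norm_num) fun z hz =>
      hasSum_gegenbauer_mul_pow hα' t (by
        push_cast at hz
        nlinarith [norm_nonneg z, mul_le_mul_of_nonneg_left ht (norm_nonneg z)])).hasFPowerSeriesAt
  have hF : DifferentiableOn ℂ F (ball 0 1) := fun z hz =>
    ((by fun_prop : Differentiable ℂ fun z : ℂ => 1 - 2 * z * t + z ^ 2) z).cpow_const
      (one_sub_two_mul_mul_add_sq_mem_slitPlane ht (mem_ball_zero_iff.1 hz))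
      |>.differentiableWithinAt
  have hbase : 0 ≤ 1 - 2 * r * t + r ^ 2 := by nlinarith [abs_le.1 ht]
  have H := hsmall.hasSum_of_differentiableOn hF (y := r) (by simpa [abs_of_pos hr0])
  simp only [FormalMultilinearSeries.ofScalars_apply_eq, smul_eq_mul, zero_add, F] at H
  have hval :
      (((1 - 2 * r * t + r ^ 2) ^ (-α) : ℝ) : ℂ) = (1 - 2 * r * t + r ^ 2) ^ (-α : ℂ) := by
    rw [Complex.ofReal_cpow hbase]
    push_cast
    rfl
  rw [← hval] at H
  refine (Complex.hasSum_ofReal.1 ?_).tsum_eq.symm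
  simpa [mul_comm] using H
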